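/- Let H be a real Hilbert space and J : H → ℝ Fréchet differentiable on the closed ball B̄(R) with the strict convexity property J(p+h) − J(p) − ⟨J'(p), h⟩ ≥ C‖h‖² for all p, p+h ∈ B̄(R). Let p* ∈ B̄(R), and let p_min ∈ B̄(R) be a minimizer satisfying the variational inequality ⟨J'(p_min), y − p_min⟩ ≥ 0 for all y ∈ B̄(R). If J(p_min) ≥ 0 and J(p*) ≤ C₂ δ², then ‖p_min − p*‖ ≤ √(C₂/C) · δ. -/

import Mathlib

open RealInnerProductSpace

/-- The variational inequality makes the linear term of the strong convexity bound nonnegative. -/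
theorem mul_sq_norm_sub_le_sub_of_variational
    {H : Type*} [NormedAddCommGroup H] [InnerProductSpace ℝ H]
    {s : Set H} {C : ℝ} {J : H → ℝ} {J' : H → H} {x y : H}
    (hconv : ∀ p h : H, p ∈ s → p + h ∈ s → J (p + h) - J p - ⟪J' p, h⟫ ≥ C * ‖h‖ ^ 2)
    (hx : x ∈ s) (hvar : ∀ y ∈ s, ⟪J' x, y - x⟫ ≥ 0) (hy : y ∈ s) :
    C * ‖y - x‖ ^ 2 ≤ J y - J x := by
  have hgrowth := hconv x (y - x) hx (by rwa [add_sub_cancel])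
  rw [add_sub_cancel] at hgrowth
  linarith [hvar y hy]

theorem le_sqrt_div_mul_of_mul_sq_le {C C₂ δ t : ℝ} (hC : 0 < C) (hδ : 0 ≤ δ)
    (h : C * t ^ 2 ≤ C₂ * δ ^ 2) : t ≤ √(C₂ / C) * δ := by
  have hsq : t ^ 2 ≤ C₂ / C * δ ^ 2 := by
    rw [div_mul_eq_mul_div, le_div_iff₀ hC]
    linarith
  calc t ≤ |t| := le_abs_self t
    _ = √(t ^ 2) := (Real.sqrt_sq_eq_abs t).symm
    _ ≤ √(C₂ / C * δ ^ 2) := Real.sqrt_le_sqrt hsq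
    _ = √(C₂ / C) * δ := by rw [Real.sqrt_mul' _ (sq_nonneg δ), Real.sqrt_sq hδ]

theorem minimizer_close_to_exact_general
    {H : Type*} [NormedAddCommGroup H] [InnerProductSpace ℝ H]
    (R C C₂ δ : ℝ) (hC : 0 < C) (hδ : 0 < δ)
    (J : H → ℝ) (J' : H → H) (pstar pmin : H)
    (hconv : ∀ p h : H, ‖p‖ ≤ R → ‖p + h‖ ≤ R →
      J (p + h) - J p - (inner ℝ (J' p) h : ℝ) ≥ C * ‖h‖ ^ 2)
    (hps : ‖pstar‖ ≤ R) (hpm : ‖pmin‖ ≤ R)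
    (hvar : ∀ y : H, ‖y‖ ≤ R → (inner ℝ (J' pmin) (y - pmin) : ℝ) ≥ 0)
    (hJm : 0 ≤ J pmin) (hJs : J pstar ≤ C₂ * δ ^ 2) :
    ‖pmin - pstar‖ ≤ Real.sqrt (C₂ / C) * δ := by
  have hgap : C * ‖pstar - pmin‖ ^ 2 ≤ J pstar - J pmin :=
    mul_sq_norm_sub_le_sub_of_variational (s := {p | ‖p‖ ≤ R}) hconv hpm hvar hps
  rw [norm_sub_rev] at hgap
  exact le_sqrt_div_mul_of_mul_sq_le hC hδ.le (by linarith)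

/-- Core of Theorem 5.4 (estimate (5.7)): the minimizer is `√(C₂/C)·δ`-close to
the exact solution. -/
theorem minimizer_close_to_exact
    {H : Type*} [NormedAddCommGroup H] [InnerProductSpace ℝ H]
    (R C C₂ δ : ℝ) (hR : 0 < R) (hC : 0 < C) (hC₂ : 0 < C₂) (hδ : 0 < δ)
    (J : H → ℝ) (J' : H → H) (pstar pmin : H)
    (hconv : ∀ p h : H, ‖p‖ ≤ R → ‖p + h‖ ≤ R →
      J (p + h) - J p - (inner ℝ (J' p) h : ℝ) ≥ C * ‖h‖ ^ 2)
    (hps : ‖pstar‖ ≤ R) (hpm : ‖pmin‖ ≤ R)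
    (hvar : ∀ y : H, ‖y‖ ≤ R → (inner ℝ (J' pmin) (y - pmin) : ℝ) ≥ 0)
    (hJm : 0 ≤ J pmin) (hJs : J pstar ≤ C₂ * δ ^ 2) :
    ‖pmin - pstar‖ ≤ Real.sqrt (C₂ / C) * δ :=
  minimizer_close_to_exact_general R C C₂ δ hC hδ J J' pstar pmin hconv hps hpm hvar hJm hJs
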